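/- arXiv:2401.12550 — 5 statements merged into one kernel-verified Lean document; each statement's English description precedes it below -/
import Mathlib

section
/- ReLU maps unions of polytopes to unions of polytopes (Lemma 2): for any finite index type ι and any family of finite sets V : ι → Set (Fin n → ℝ) with each V i finite, there exist a finite index type κ and a family of finite sets W : κ → Set (Fin n → ℝ) such that the image of ⋃ i, convexHull ℝ (V i) under the ReLU map r equals ⋃ j, convexHull ℝ (W j). -/
/-!
On the closed orthant where the coordinates in `s` are `≤ 0` and the others `≥ 0`, ReLU agrees
with the linear map zeroing the coordinates in `s`. Hence `relu '' P` is the union over all `s` of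
linear images of `P ∩ orthant s`, and it suffices that a polytope cut by a halfspace `ℓ ≤ c` is a
polytope. It is spanned by the vertices with `ℓ ≤ c` and the points where the hyperplane `ℓ = c`
meets the segments joining a vertex below it to a vertex above it: a point `x` of the cut polytope
lies on a segment `[y, z]` with `y` in the hull of the lower vertices and `z` in the hull of the
upper ones, hence on `[y, p]` with `p` the point of `[y, z]` on the hyperplane; and `p` lies in the
hull of the cut points of vertex pairs because central projection onto a hyperplane, from a point
on one side of it, maps segments on the other side to segments.
-/

/-- The componentwise ReLU map on `ℝ^n`. -/
noncomputable def relu {n : ℕ} (x : Fin n → ℝ) : Fin n → ℝ :=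
  fun i => max (x i) 0

open Set

section IsPolytope

variable (𝕜 : Type*) {E F : Type*} [Semiring 𝕜] [PartialOrder 𝕜] [AddCommMonoid E] [Module 𝕜 E]
  [AddCommMonoid F] [Module 𝕜 F]

def IsPolytope (P : Set E) : Prop :=
  ∃ V : Set E, V.Finite ∧ convexHull 𝕜 V = P

variable {𝕜}

lemma isPolytope_convexHull {V : Set E} (hV : V.Finite) : IsPolytope 𝕜 (convexHull 𝕜 V) :=
  ⟨V, hV, rfl⟩

lemma IsPolytope.image_linearMap {P : Set E} (hP : IsPolytope 𝕜 P) (f : E →ₗ[𝕜] F) :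
    IsPolytope 𝕜 (f '' P) := by
  obtain ⟨V, hV, rfl⟩ := hP
  exact ⟨f '' V, hV.image f, (f.image_convexHull V).symm⟩

end IsPolytope

section Cut

variable {𝕜 E : Type*} [Field 𝕜] [AddCommGroup E] [Module 𝕜 E] (ℓ : E →ₗ[𝕜] 𝕜) (c : 𝕜)

/-- The point where the line through `a` and `b` meets the hyperplane `ℓ = c`. -/
noncomputable def cutPoint (a b : E) : E :=
  AffineMap.lineMap a b ((c - ℓ a) / (ℓ b - ℓ a))

variable {ℓ c}

lemma apply_cutPoint {a b : E} (h : ℓ a ≠ ℓ b) : ℓ (cutPoint ℓ c a b) = c := by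
  have : ℓ b - ℓ a ≠ 0 := sub_ne_zero.2 h.symm
  simp only [cutPoint, AffineMap.lineMap_apply_module, map_add, map_smul, smul_eq_mul]
  field_simp
  ring

lemma cutPoint_neg_swap {a b : E} (h : ℓ a ≠ ℓ b) :
    cutPoint (-ℓ) (-c) b a = cutPoint ℓ c a b := by
  have : ℓ b - ℓ a ≠ 0 := sub_ne_zero.2 h.symm
  have : ℓ a - ℓ b ≠ 0 := sub_ne_zero.2 h
  rw [cutPoint, cutPoint, ← AffineMap.lineMap_apply_one_sub]
  congr 1
  simp only [LinearMap.neg_apply, neg_sub_neg]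
  field_simp
  ring

variable [LinearOrder 𝕜] [IsStrictOrderedRing 𝕜]

lemma cutPoint_mem_segment {a b : E} (ha : ℓ a ≤ c) (hb : c < ℓ b) :
    cutPoint ℓ c a b ∈ segment 𝕜 a b := by
  rw [segment_eq_image_lineMap]
  exact ⟨_, ⟨div_nonneg (sub_nonneg.2 ha) (by linarith), div_le_one_of_le₀ (by linarith)
    (by linarith)⟩, rfl⟩

lemma cutPoint_mem_segment_cutPoint {y₁ y₂ y z : E} (h₁ : ℓ y₁ < ℓ z) (h₂ : ℓ y₂ < ℓ z)
    (hy : y ∈ segment 𝕜 y₁ y₂) :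
    cutPoint ℓ c y z ∈ segment 𝕜 (cutPoint ℓ c y₁ z) (cutPoint ℓ c y₂ z) := by
  have hyz : ℓ y < ℓ z := (convex_halfSpace_lt ℓ.isLinear _).segment_subset h₁ h₂ hy
  obtain ⟨a, b, ha, hb, hab, rfl⟩ := hy
  obtain rfl : b = 1 - a := by linear_combination hab
  simp only [map_add, map_smul, smul_eq_mul] at hyz
  have hd : ℓ z - (a * ℓ y₁ + (1 - a) * ℓ y₂) ≠ 0 := by linarith
  refine ⟨a * (ℓ z - ℓ y₁) / (ℓ z - (a * ℓ y₁ + (1 - a) * ℓ y₂)),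
    (1 - a) * (ℓ z - ℓ y₂) / (ℓ z - (a * ℓ y₁ + (1 - a) * ℓ y₂)),
    div_nonneg (mul_nonneg ha (by linarith)) (by linarith),
    div_nonneg (mul_nonneg hb (by linarith)) (by linarith), by field_simp; ring, ?_⟩
  have h₁' : ℓ z - ℓ y₁ ≠ 0 := by linarith
  have h₂' : ℓ z - ℓ y₂ ≠ 0 := by linarith
  simp only [cutPoint, AffineMap.lineMap_apply_module, map_add, map_smul, smul_eq_mul]
  match_scalars <;> field_simp <;> ring

lemma cutPoint_left_mem_convexHull_image {S : Set E} {y z : E} (hS : ∀ u ∈ S, ℓ u < ℓ z)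
    (hy : y ∈ convexHull 𝕜 S) :
    cutPoint ℓ c y z ∈ convexHull 𝕜 ((cutPoint ℓ c · z) '' S) := by
  let C := {y | ℓ y < ℓ z} ∩ (cutPoint ℓ c · z) ⁻¹' convexHull 𝕜 ((cutPoint ℓ c · z) '' S)
  have hC : Convex 𝕜 C := by
    rw [convex_iff_segment_subset]
    rintro y₁ ⟨h₁, hy₁⟩ y₂ ⟨h₂, hy₂⟩ y hy
    refine ⟨?_, ?_⟩
    · exact (convex_halfSpace_lt ℓ.isLinear _).segment_subset h₁ h₂ hy
    · exact (convex_convexHull 𝕜 _).segment_subset hy₁ hy₂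
        (cutPoint_mem_segment_cutPoint h₁ h₂ hy)
  have hSC : S ⊆ C := fun u hu => ⟨hS u hu, subset_convexHull 𝕜 _ (mem_image_of_mem _ hu)⟩
  exact (convexHull_min hSC hC hy).2

lemma cutPoint_right_mem_convexHull_image {T : Set E} {y z : E} (hT : ∀ v ∈ T, ℓ y < ℓ v)
    (hz : z ∈ convexHull 𝕜 T) :
    cutPoint ℓ c y z ∈ convexHull 𝕜 (cutPoint ℓ c y '' T) := by
  have hyz : ℓ y < ℓ z := convexHull_min hT (convex_halfSpace_gt ℓ.isLinear _) hz
  have key := cutPoint_left_mem_convexHull_image (ℓ := -ℓ) (c := -c) (y := z) (z := y)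
    (fun v hv => neg_lt_neg (hT v hv)) hz
  rwa [cutPoint_neg_swap hyz.ne, image_congr fun v hv => cutPoint_neg_swap (hT v hv).ne] at key

lemma cutPoint_mem_convexHull_image2 {S T : Set E} (hST : ∀ u ∈ S, ∀ v ∈ T, ℓ u < ℓ v)
    {y z : E} (hy : y ∈ convexHull 𝕜 S) (hz : z ∈ convexHull 𝕜 T) :
    cutPoint ℓ c y z ∈ convexHull 𝕜 (image2 (cutPoint ℓ c) S T) := by
  have hyT : ∀ v ∈ T, ℓ y < ℓ v := fun v hv =>
    convexHull_min (fun u hu => hST u hu v hv) (convex_halfSpace_lt ℓ.isLinear _) hy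
  refine convexHull_min ?_ (convex_convexHull 𝕜 _) (cutPoint_right_mem_convexHull_image hyT hz)
  rintro _ ⟨v, hv, rfl⟩
  exact convexHull_mono (image_subset_image2_left hv)
    (cutPoint_left_mem_convexHull_image (fun u hu => hST u hu v hv) hy)

lemma mem_segment_cutPoint {x y z : E} (hy : ℓ y ≤ c) (hz : c < ℓ z) (hx : x ∈ segment 𝕜 y z)
    (hxc : ℓ x ≤ c) : x ∈ segment 𝕜 y (cutPoint ℓ c y z) := by
  rw [segment_eq_image_lineMap] at hx ⊢
  obtain ⟨t, ⟨ht₀, ht₁⟩, rfl⟩ := hx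
  simp only [AffineMap.lineMap_apply_module, map_add, map_smul, smul_eq_mul] at hxc
  have hτ : t ≤ (c - ℓ y) / (ℓ z - ℓ y) := by
    rw [le_div_iff₀ (by linarith)]; linarith
  refine ⟨t / ((c - ℓ y) / (ℓ z - ℓ y)), ⟨div_nonneg ht₀ (ht₀.trans hτ), div_le_one_of_le₀ hτ
    (ht₀.trans hτ)⟩, ?_⟩
  rw [cutPoint, AffineMap.lineMap_lineMap_right, div_mul_cancel_of_imp]
  -- if the cut point is `y` itself then `t = 0`, so the junk value `t / 0 = 0` is still right
  intro h
  exact le_antisymm (h ▸ hτ) ht₀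

theorem convexHull_inter_halfspace (V : Set E) :
    convexHull 𝕜 V ∩ {x | ℓ x ≤ c} = convexHull 𝕜 ({v ∈ V | ℓ v ≤ c} ∪
      image2 (cutPoint ℓ c) {v ∈ V | ℓ v ≤ c} {v ∈ V | c < ℓ v}) := by
  set Vlo := {v ∈ V | ℓ v ≤ c}
  set Vhi := {v ∈ V | c < ℓ v}
  refine Subset.antisymm ?_ <| convexHull_min (union_subset ?_ ?_) <|
    (convex_convexHull 𝕜 V).inter (convex_halfSpace_le ℓ.isLinear c)
  · rintro x ⟨hx, hxc⟩
    have hV : V = Vlo ∪ Vhi := by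
      ext v; simp only [Vlo, Vhi, mem_union, mem_sep_iff, ← and_or_left, le_or_gt, and_true]
    rcases Vhi.eq_empty_or_nonempty with hhi | hhi
    · rw [hV, hhi, union_empty] at hx
      exact convexHull_mono subset_union_left hx
    rcases Vlo.eq_empty_or_nonempty with hlo | hlo
    · rw [hV, hlo, empty_union] at hx
      exact absurd (convexHull_min (fun v hv => hv.2) (convex_halfSpace_gt ℓ.isLinear c) hx)
        hxc.not_gt
    rw [hV, convexHull_union hlo hhi, mem_convexJoin] at hx
    obtain ⟨y, hy, z, hz, hxyz⟩ := hx
    have hyc : ℓ y ≤ c := convexHull_min (fun v hv => hv.2) (convex_halfSpace_le ℓ.isLinear c) hy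
    have hzc : c < ℓ z := convexHull_min (fun v hv => hv.2) (convex_halfSpace_gt ℓ.isLinear c) hz
    have hcut : cutPoint ℓ c y z ∈ convexHull 𝕜 (image2 (cutPoint ℓ c) Vlo Vhi) :=
      cutPoint_mem_convexHull_image2 (fun u hu v hv => hu.2.trans_lt hv.2) hy hz
    exact (convex_convexHull 𝕜 _).segment_subset (convexHull_mono subset_union_left hy)
      (convexHull_mono subset_union_right hcut) (mem_segment_cutPoint hyc hzc hxyz hxc)
  · exact fun v hv => ⟨subset_convexHull 𝕜 V hv.1, hv.2⟩
  · rintro _ ⟨u, hu, v, hv, rfl⟩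
    exact ⟨segment_subset_convexHull hu.1 hv.1 (cutPoint_mem_segment hu.2 hv.2),
      (apply_cutPoint (hu.2.trans_lt hv.2).ne).le⟩

end Cut

namespace IsPolytope

variable {𝕜 E : Type*} [Field 𝕜] [LinearOrder 𝕜] [IsStrictOrderedRing 𝕜] [AddCommGroup E]
  [Module 𝕜 E] {P : Set E}

lemma inter_halfspace (hP : IsPolytope 𝕜 P) (ℓ : E →ₗ[𝕜] 𝕜) (c : 𝕜) :
    IsPolytope 𝕜 (P ∩ {x | ℓ x ≤ c}) := by
  obtain ⟨V, hV, rfl⟩ := hP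
  have hVlo : {v ∈ V | ℓ v ≤ c}.Finite := hV.subset (sep_subset _ _)
  exact ⟨_, hVlo.union (hVlo.image2 _ (hV.subset (sep_subset _ _))),
    (convexHull_inter_halfspace V).symm⟩

lemma inter_iInter_halfspace {J : Type*} [Finite J] (hP : IsPolytope 𝕜 P) (ℓ : J → E →ₗ[𝕜] 𝕜)
    (c : J → 𝕜) : IsPolytope 𝕜 (P ∩ ⋂ j, {x | ℓ j x ≤ c j}) := by
  classical
  have hfin : ∀ s : Finset J, IsPolytope 𝕜 (P ∩ ⋂ j ∈ s, {x | ℓ j x ≤ c j}) := by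
    intro s
    induction s using Finset.induction_on with
    | empty => simpa using hP
    | insert j s _ ih =>
      rw [Finset.set_biInter_insert, inter_left_comm, inter_comm]
      exact ih.inter_halfspace (ℓ j) (c j)
  cases nonempty_fintype J
  simpa using hfin Finset.univ

end IsPolytope

section Relu

variable {n : ℕ}

def zeroCoords (s : Finset (Fin n)) : (Fin n → ℝ) →ₗ[ℝ] Fin n → ℝ :=
  LinearMap.pi fun i => if i ∈ s then 0 else LinearMap.proj i

def orthant (s : Finset (Fin n)) : Set (Fin n → ℝ) :=
  ⋂ i, {x | (if i ∈ s then LinearMap.proj i else -LinearMap.proj i :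
    (Fin n → ℝ) →ₗ[ℝ] ℝ) x ≤ 0}

lemma relu_eq_zeroCoords {s : Finset (Fin n)} {x : Fin n → ℝ} (hx : x ∈ orthant s) :
    relu x = zeroCoords s x := by
  funext i
  have hxi := mem_iInter.1 hx i
  by_cases hi : i ∈ s <;> simp_all [relu, zeroCoords]

lemma mem_orthant_setOf_nonpos (x : Fin n → ℝ) : x ∈ orthant {i | x i ≤ 0} := by
  refine mem_iInter.2 fun i => ?_
  by_cases hi : x i ≤ 0
  · simp [hi]
  · simpa [hi] using (not_le.1 hi).le

lemma relu_image_eq_iUnion_orthant (P : Set (Fin n → ℝ)) :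
    relu '' P = ⋃ s, zeroCoords s '' (P ∩ orthant s) := by
  ext y
  simp only [mem_image, mem_iUnion, mem_inter_iff]
  constructor
  · rintro ⟨x, hx, rfl⟩
    have hxs := mem_orthant_setOf_nonpos x
    exact ⟨_, x, ⟨hx, hxs⟩, (relu_eq_zeroCoords hxs).symm⟩
  · rintro ⟨s, x, ⟨hx, hs⟩, rfl⟩
    exact ⟨x, hx, relu_eq_zeroCoords hs⟩

end Relu

/-- ReLU maps unions of polytopes to unions of polytopes. -/
theorem relu_image_iUnion_polytopes {n : ℕ} (ι : Type) [Fintype ι]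
    (V : ι → Set (Fin n → ℝ)) (hV : ∀ i, (V i).Finite) :
    ∃ (κ : Type) (_ : Fintype κ) (W : κ → Set (Fin n → ℝ)),
      (∀ j, (W j).Finite) ∧
      relu '' (⋃ i, convexHull ℝ (V i)) = ⋃ j, convexHull ℝ (W j) := by
  have hpoly : ∀ p : ι × Finset (Fin n),
      IsPolytope ℝ (zeroCoords p.2 '' (convexHull ℝ (V p.1) ∩ orthant p.2)) := fun p =>
    ((isPolytope_convexHull (hV p.1)).inter_iInter_halfspace _ _).image_linearMap _
  choose W hW hWP using hpoly
  refine ⟨ι × Finset (Fin n), inferInstance, W, hW, ?_⟩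
  simp_rw [hWP, iUnion_prod', image_iUnion, relu_image_eq_iUnion_orthant]
end

section
/- Cross-section of a polytope by a coordinate hyperplane: for every finite set V ⊆ (Fin n → ℝ) and every index d : Fin n, (convexHull ℝ V) ∩ {x | x d = 0} = convexHull ℝ ({v ∈ V | v d = 0} ∪ I_d(V)). -/
/-!
Write a point `x` of the section as a convex combination `∑ cᵢ • zᵢ` of points of `V`. Since
`f x = 0`, the vertices on the positive side of the hyperplane carry the same mass
`S = ∑_{f zᵢ > 0} cᵢ f zᵢ = ∑_{f zⱼ < 0} cⱼ (-f zⱼ)` as those on the negative side. Because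
`(f v - f w) • p(v, w) = (-f w) • v + f v • w` for the crossing point `p(v, w)` of the segment
`[v, w]`, the weights `cᵢ cⱼ (f zᵢ - f zⱼ) / S` on the pairs of a positive and a negative vertex
redistribute exactly the mass of those vertices onto crossing points, while the vertices on the
hyperplane keep their own weights.
-/

/-- The intersection-point set `I_d(V)`: points where segments joining a vertex
with positive `d`-coordinate to a vertex with negative `d`-coordinate cross the
hyperplane `{x | x d = 0}`. -/
def interPts {n : ℕ} (d : Fin n) (V : Set (Fin n → ℝ)) : Set (Fin n → ℝ) :=
  {x | ∃ v ∈ V, ∃ w ∈ V, v d > 0 ∧ w d < 0 ∧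
    x = ((-(w d)) / (v d - w d)) • v + ((v d) / (v d - w d)) • w}

open Finset

theorem Finset.sum_filter_pos_add_sum_filter_neg_add_sum_filter_zero {ι α M : Type*}
    [LinearOrder α] [Zero α] [AddCommMonoid M] (t : Finset ι) (g : ι → α) (F : ι → M) :
    ∑ i ∈ t with 0 < g i, F i + ∑ i ∈ t with g i < 0, F i + ∑ i ∈ t with g i = 0, F i =
      ∑ i ∈ t, F i := by
  rw [add_assoc, ← sum_filter_add_sum_filter_not t (0 < g ·),
    ← sum_filter_add_sum_filter_not (t.filter (¬ 0 < g ·)) (g · < 0), filter_filter, filter_filter]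
  congr 3 <;> ext i <;> simp only [mem_filter, not_lt] <;> grind

section Field

variable {𝕜 E : Type*} [Field 𝕜] [AddCommGroup E] [Module 𝕜 E] (f : E →ₗ[𝕜] 𝕜)

def crossPoint (v w : E) : E := (-(f w) / (f v - f w)) • v + (f v / (f v - f w)) • w

variable {f}

theorem sub_smul_crossPoint {v w : E} (h : f v ≠ f w) :
    (f v - f w) • crossPoint f v w = (-(f w)) • v + f v • w := by
  simp only [crossPoint, smul_add, smul_smul, mul_div_cancel₀ _ (sub_ne_zero.2 h)]

theorem map_crossPoint {v w : E} (h : f v ≠ f w) : f (crossPoint f v w) = 0 := by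
  have hvw := congrArg f (sub_smul_crossPoint h)
  simp only [map_smul, map_add, smul_eq_mul] at hvw
  exact (mul_eq_zero.1 (hvw.trans (by ring))).resolve_left (sub_ne_zero.2 h)

end Field

section OrderedField

variable {𝕜 E ι κ : Type*} [Field 𝕜] [LinearOrder 𝕜] [IsStrictOrderedRing 𝕜]
  [AddCommGroup E] [Module 𝕜 E]

def crossPoints (f : E →ₗ[𝕜] 𝕜) (V : Set E) : Set E :=
  {x | ∃ v ∈ V, ∃ w ∈ V, 0 < f v ∧ f w < 0 ∧ x = crossPoint f v w}

theorem crossPoint_mem_segment {f : E →ₗ[𝕜] 𝕜} {v w : E} (hv : 0 < f v) (hw : f w < 0) :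
    crossPoint f v w ∈ segment 𝕜 v w := by
  have hvw : 0 < f v - f w := by linarith
  exact ⟨_, _, div_nonneg (neg_nonneg.2 hw.le) hvw.le, div_nonneg hv.le hvw.le,
    by rw [← add_div, neg_add_eq_sub, div_self hvw.ne'], rfl⟩

theorem Convex.sum_add_sum_mem {s : Set E} (hs : Convex 𝕜 s) {A : Finset ι} {B : Finset κ}
    {u : ι → 𝕜} {w : κ → 𝕜} {x : ι → E} {y : κ → E} (hu : ∀ i ∈ A, 0 ≤ u i)
    (hw : ∀ j ∈ B, 0 ≤ w j) (h₁ : ∑ i ∈ A, u i + ∑ j ∈ B, w j = 1) (hx : ∀ i ∈ A, x i ∈ s)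
    (hy : ∀ j ∈ B, y j ∈ s) :
    ∑ i ∈ A, u i • x i + ∑ j ∈ B, w j • y j ∈ s := by
  have := hs.sum_mem (t := A.disjSum B) (w := Sum.elim u w) (z := Sum.elim x y)
    (by rintro (i | j) h <;> simp_all) (by simpa [sum_disjSum] using h₁)
    (by rintro (i | j) h <;> simp_all)
  simpa [sum_disjSum] using this

theorem Finset.sum_product_smul_eq_of_balanced {M : Type*} [AddCommGroup M] [Module 𝕜 M]
    {P N : Finset ι} {c a b : ι → 𝕜} (g : ι → M) (hcP : ∀ i ∈ P, 0 ≤ c i)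
    (hcN : ∀ j ∈ N, 0 ≤ c j) (ha : ∀ i ∈ P, 0 < a i) (hb : ∀ j ∈ N, 0 < b j) {S : 𝕜}
    (hP : ∑ i ∈ P, c i * a i = S) (hN : ∑ j ∈ N, c j * b j = S) :
    ∑ p ∈ P ×ˢ N, (c p.1 * c p.2 / S) • (b p.2 • g p.1 + a p.1 • g p.2) =
      ∑ i ∈ P, c i • g i + ∑ j ∈ N, c j • g j := by
  rcases eq_or_ne S 0 with rfl | hS
  · have hcP0 : ∀ i ∈ P, c i = 0 := fun i hi =>
      (mul_eq_zero.1 ((sum_eq_zero_iff_of_nonneg fun i hi =>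
        mul_nonneg (hcP i hi) (ha i hi).le).1 hP i hi)).resolve_right (ha i hi).ne'
    have hcN0 : ∀ j ∈ N, c j = 0 := fun j hj =>
      (mul_eq_zero.1 ((sum_eq_zero_iff_of_nonneg fun j hj =>
        mul_nonneg (hcN j hj) (hb j hj).le).1 hN j hj)).resolve_right (hb j hj).ne'
    simp [sum_eq_zero (fun i hi => by rw [hcP0 i hi, zero_smul] : ∀ i ∈ P, c i • g i = 0),
      sum_eq_zero (fun j hj => by rw [hcN0 j hj, zero_smul] : ∀ j ∈ N, c j • g j = 0)]
  · have hsplit : ∀ p ∈ P ×ˢ N, (c p.1 * c p.2 / S) • (b p.2 • g p.1 + a p.1 • g p.2) =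
        (c p.2 * b p.2 / S) • (c p.1 • g p.1) + (c p.1 * a p.1 / S) • (c p.2 • g p.2) :=
      fun p _ => by module
    rw [sum_congr rfl hsplit, sum_add_distrib, sum_product, sum_product_right]
    simp only [← sum_smul, ← sum_div, hP, hN, div_self hS, one_smul]

variable {f : E →ₗ[𝕜] 𝕜}

theorem exists_sum_smul_crossPoint_eq {P N : Finset ι} {c : ι → 𝕜} {z : ι → E}
    (hcP : ∀ i ∈ P, 0 ≤ c i) (hcN : ∀ j ∈ N, 0 ≤ c j) (hfP : ∀ i ∈ P, 0 < f (z i))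
    (hfN : ∀ j ∈ N, f (z j) < 0)
    (hbalance : ∑ j ∈ N, c j * -f (z j) = ∑ i ∈ P, c i * f (z i)) :
    ∃ W : ι × ι → 𝕜, (∀ p ∈ P ×ˢ N, 0 ≤ W p) ∧
      ∑ p ∈ P ×ˢ N, W p = ∑ i ∈ P, c i + ∑ j ∈ N, c j ∧
      ∑ p ∈ P ×ˢ N, W p • crossPoint f (z p.1) (z p.2) =
        ∑ i ∈ P, c i • z i + ∑ j ∈ N, c j • z j := by
  set S := ∑ i ∈ P, c i * f (z i)
  have hS : 0 ≤ S := sum_nonneg fun i hi => mul_nonneg (hcP i hi) (hfP i hi).le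
  have hfN' : ∀ j ∈ N, 0 < -f (z j) := fun j hj => neg_pos.2 (hfN j hj)
  refine ⟨fun p => c p.1 * c p.2 / S * (f (z p.1) - f (z p.2)), fun p hp => ?_, ?_, ?_⟩
  · obtain ⟨hi, hj⟩ := mem_product.1 hp
    have := hfP _ hi
    have := hfN _ hj
    exact mul_nonneg (div_nonneg (mul_nonneg (hcP _ hi) (hcN _ hj)) hS) (by linarith)
  · have hmass := sum_product_smul_eq_of_balanced (fun _ => (1 : 𝕜)) hcP hcN hfP hfN' rfl hbalance
    simp only [smul_eq_mul, mul_one] at hmass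
    rw [← hmass]
    exact sum_congr rfl fun p _ => by ring
  · rw [← sum_product_smul_eq_of_balanced z hcP hcN hfP hfN' rfl hbalance]
    refine sum_congr rfl fun p hp => ?_
    have := hfP _ (mem_product.1 hp).1
    have := hfN _ (mem_product.1 hp).2
    rw [mul_smul, sub_smul_crossPoint (by linarith)]

theorem sum_smul_mem_convexHull_crossPoints {V : Set E} {t : Finset ι} {c : ι → 𝕜} {z : ι → E}
    (hc₀ : ∀ i ∈ t, 0 ≤ c i) (hc₁ : ∑ i ∈ t, c i = 1) (hz : ∀ i ∈ t, z i ∈ V)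
    (hf : f (∑ i ∈ t, c i • z i) = 0) :
    ∑ i ∈ t, c i • z i ∈ convexHull 𝕜 ({v ∈ V | f v = 0} ∪ crossPoints f V) := by
  classical
  have hf' : ∑ i ∈ t, c i * f (z i) = 0 := by
    simpa only [map_sum, map_smul, smul_eq_mul] using hf
  have hsplit_f := t.sum_filter_pos_add_sum_filter_neg_add_sum_filter_zero (fun i => f (z i))
    (fun i => c i * f (z i))
  have hsplit_z := t.sum_filter_pos_add_sum_filter_neg_add_sum_filter_zero (fun i => f (z i))
    (fun i => c i • z i)
  have hsplit_c := t.sum_filter_pos_add_sum_filter_neg_add_sum_filter_zero (fun i => f (z i)) c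
  set P := t.filter fun i => 0 < f (z i)
  set N := t.filter fun i => f (z i) < 0
  set Z := t.filter fun i => f (z i) = 0
  have hbalance : ∑ j ∈ N, c j * -f (z j) = ∑ i ∈ P, c i * f (z i) := by
    rw [sum_eq_zero (s := Z) fun i hi => by simp [(mem_filter.1 hi).2]] at hsplit_f
    simp only [mul_neg, sum_neg_distrib]
    linear_combination -hsplit_f - hf'
  obtain ⟨W, hW₀, hW₁, hWz⟩ := exists_sum_smul_crossPoint_eq (f := f)
    (fun i hi => hc₀ i (filter_subset _ _ hi)) (fun j hj => hc₀ j (filter_subset _ _ hj))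
    (fun i hi => (mem_filter.1 hi).2) (fun j hj => (mem_filter.1 hj).2) hbalance
  rw [← hsplit_z, ← hWz, add_comm]
  refine (convex_convexHull 𝕜 _).sum_add_sum_mem (fun i hi => hc₀ i (filter_subset _ _ hi)) hW₀
    ?_ (fun i hi => subset_convexHull 𝕜 _ (Or.inl ?_))
    (fun p hp => subset_convexHull 𝕜 _ (Or.inr ?_))
  · rw [hW₁, ← hc₁, ← hsplit_c, add_comm]
  · exact ⟨hz i (filter_subset _ _ hi), (mem_filter.1 hi).2⟩
  · obtain ⟨hi, hj⟩ := mem_product.1 hp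
    exact ⟨_, hz _ (filter_subset _ _ hi), _, hz _ (filter_subset _ _ hj), (mem_filter.1 hi).2,
      (mem_filter.1 hj).2, rfl⟩

theorem convexHull_inter_setOf_eq_zero (V : Set E) :
    convexHull 𝕜 V ∩ {x | f x = 0} = convexHull 𝕜 ({v ∈ V | f v = 0} ∪ crossPoints f V) := by
  refine Set.Subset.antisymm ?_ (convexHull_min (Set.union_subset ?_ ?_)
    ((convex_convexHull 𝕜 V).inter (LinearMap.ker f).convex))
  · rintro x ⟨hx, hfx⟩
    obtain ⟨ι, _, c, z, hc₀, hc₁, hz, rfl⟩ := mem_convexHull_iff_exists_fintype.1 hx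
    exact sum_smul_mem_convexHull_crossPoints (fun i _ => hc₀ i) hc₁ (fun i _ => hz i) hfx
  · exact fun v hv => ⟨subset_convexHull 𝕜 V hv.1, hv.2⟩
  · rintro _ ⟨v, hv, w, hw, hfv, hfw, rfl⟩
    exact ⟨segment_subset_convexHull hv hw (crossPoint_mem_segment hfv hfw),
      map_crossPoint (by linarith)⟩

end OrderedField

theorem polytope_hyperplane_section_general {n : ℕ} (V : Set (Fin n → ℝ))
    (d : Fin n) :
    (convexHull ℝ V) ∩ {x | x d = 0} =
      convexHull ℝ ({v ∈ V | v d = 0} ∪ interPts d V) :=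
  convexHull_inter_setOf_eq_zero (f := LinearMap.proj d) V

/-- Cross-section of a polytope by a coordinate hyperplane. -/
theorem polytope_hyperplane_section {n : ℕ} (V : Set (Fin n → ℝ))
    (hV : V.Finite) (d : Fin n) :
    (convexHull ℝ V) ∩ {x | x d = 0} =
      convexHull ℝ ({v ∈ V | v d = 0} ∪ interPts d V) :=
  polytope_hyperplane_section_general V d
end

section
/- Vertex description of the bottom part P_d^-: for every finite set V ⊆ (Fin n → ℝ) and every index d : Fin n, Proj_d '' ((convexHull ℝ V) ∩ {x | x d ≤ 0}) = convexHull ℝ ({Proj_d v | v ∈ V, v d ≤ 0} ∪ I_d(V)). -/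
/-- The coordinate projection onto the hyperplane `{x | x d = 0}`. -/
def projD {n : ℕ} (d : Fin n) (x : Fin n → ℝ) : Fin n → ℝ :=
  Function.update x d 0

/-!
Split `V` into `P = {v | 0 < v d}` and `N = {v | v d ≤ 0}`. A point `x` of the hull with
`x d ≤ 0` lies on a segment `[p, q]` with `p ∈ conv P`, `q ∈ conv N`, hence on `[c, q]`, where `c`
is the point where `[p, q]` crosses the hyperplane `{x d = 0}`. In either endpoint the crossing
point is a perspective map `y ↦ (g y)⁻¹ • L y` with `g`, `L` affine and `g > 0`, and such maps send
convex hulls into convex hulls of images. Applying this once in each endpoint puts `c` in the hull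
of `N` and the crossing points `I_d(V)` of pairs of vertices. Finally `Proj_d` is linear and fixes
`I_d(V)`.
-/

open Set

section Perspective

variable {𝕜 E F : Type*} [Field 𝕜] [LinearOrder 𝕜] [IsStrictOrderedRing 𝕜]
  [AddCommGroup E] [Module 𝕜 E] [AddCommGroup F] [Module 𝕜 F]

theorem Convex.perspective_preimage {C : Set F} (hC : Convex 𝕜 C) (g : E →ᵃ[𝕜] 𝕜)
    (L : E →ᵃ[𝕜] F) : Convex 𝕜 {x | 0 < g x ∧ (g x)⁻¹ • L x ∈ C} := by
  rintro x ⟨hgx, hx⟩ y ⟨hgy, hy⟩ a b ha hb hab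
  have hg : 0 < g (a • x + b • y) := by
    rw [Convex.combo_affine_apply hab]
    exact convex_Ioi 0 hgx hgy ha hb hab
  refine ⟨hg, ?_⟩
  convert hC hx hy (div_nonneg (mul_nonneg ha hgx.le) hg.le)
    (div_nonneg (mul_nonneg hb hgy.le) hg.le) ?_ using 1
  · rw [Convex.combo_affine_apply hab (f := L), Convex.combo_affine_apply hab (f := g)]
    match_scalars <;> field_simp
  · rw [← add_div, div_eq_one_iff_eq hg.ne', Convex.combo_affine_apply hab, smul_eq_mul,
      smul_eq_mul]

theorem perspective_mem_convexHull_image (g : E →ᵃ[𝕜] 𝕜) (L : E →ᵃ[𝕜] F) {s : Set E}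
    (hs : ∀ x ∈ s, 0 < g x) {x : E} (hx : x ∈ convexHull 𝕜 s) :
    (g x)⁻¹ • L x ∈ convexHull 𝕜 ((fun y ↦ (g y)⁻¹ • L y) '' s) := by
  set φ := fun y ↦ (g y)⁻¹ • L y
  have hsub : s ⊆ {y | 0 < g y ∧ φ y ∈ convexHull 𝕜 (φ '' s)} :=
    fun y hy ↦ ⟨hs y hy, subset_convexHull 𝕜 _ (mem_image_of_mem _ hy)⟩
  exact (convexHull_min hsub ((convex_convexHull 𝕜 _).perspective_preimage g L) hx).2

end Perspective

section Crossing

variable {𝕜 E : Type*} [Field 𝕜] [AddCommGroup E] [Module 𝕜 E] (f : E →ₗ[𝕜] 𝕜)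

/-- The point where the line through `v` and `w` meets `ker f` (it is `0` when `f v = f w`). -/
def crossing (v w : E) : E :=
  (-f w / (f v - f w)) • v + (f v / (f v - f w)) • w

variable {f}

theorem crossing_eq_inv_smul (v w : E) :
    crossing f v w = (f v - f w)⁻¹ • ((-f w) • v + f v • w) := by
  rw [crossing, smul_add, smul_smul, smul_smul, div_eq_inv_mul, div_eq_inv_mul]

theorem apply_crossing {v w : E} (h : f v ≠ f w) : f (crossing f v w) = 0 := by
  have h' : f v - f w ≠ 0 := sub_ne_zero.2 h
  simp only [crossing, map_add, map_smul, smul_eq_mul]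
  field_simp
  ring

theorem crossing_of_apply_eq_zero {v w : E} (hv : f v ≠ 0) (hw : f w = 0) :
    crossing f v w = w := by
  simp [crossing, hw, hv]

variable [LinearOrder 𝕜] [IsStrictOrderedRing 𝕜]

theorem crossing_mem_segment {v w : E} (hv : 0 < f v) (hw : f w ≤ 0) :
    crossing f v w ∈ segment 𝕜 v w := by
  have hvw : 0 < f v - f w := by linarith
  refine ⟨_, _, div_nonneg (neg_nonneg.2 hw) hvw.le, div_nonneg hv.le hvw.le, ?_, rfl⟩
  field_simp
  ring

theorem mem_segment_crossing {p q x : E} (hp : 0 < f p) (hx : x ∈ segment 𝕜 p q)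
    (hfx : f x ≤ 0) : x ∈ segment 𝕜 (crossing f p q) q := by
  obtain ⟨a, b, ha, hb, hab, rfl⟩ := hx
  rcases ha.eq_or_lt with rfl | ha
  · obtain rfl : b = 1 := by simpa using hab
    simpa using right_mem_segment 𝕜 (crossing f p q) q
  simp only [map_add, map_smul, smul_eq_mul] at hfx
  have hq : f q < 0 := by nlinarith
  have hpq : 0 < f p - f q := by linarith
  refine ⟨a * (f p - f q) / -f q, 1 - a * (f p - f q) / -f q,
    div_nonneg (mul_nonneg ha.le hpq.le) (by linarith), ?_, by ring, ?_⟩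
  · rw [sub_nonneg, div_le_one (by linarith)]
    nlinarith
  · have := hq.ne
    rw [crossing_eq_inv_smul, ← hab]
    match_scalars
    · field_simp
    · field_simp
      ring

variable {P N : Set E}

theorem pos_of_mem_convexHull {x : E} (hP : ∀ v ∈ P, 0 < f v) (hx : x ∈ convexHull 𝕜 P) :
    0 < f x :=
  convexHull_min hP (convex_halfSpace_gt f.isLinear 0) hx

theorem crossing_mem_convexHull_image_left {w p : E} (hP : ∀ v ∈ P, f w < f v)
    (hp : p ∈ convexHull 𝕜 P) : crossing f p w ∈ convexHull 𝕜 ((crossing f · w) '' P) := by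
  have key := perspective_mem_convexHull_image (f.toAffineMap - AffineMap.const 𝕜 E (f w))
    ((-f w) • LinearMap.id + f.smulRight w).toAffineMap (fun v hv ↦ by simpa using hP v hv) hp
  simpa [crossing_eq_inv_smul] using key

theorem crossing_mem_convexHull_image_right {v q : E} (hN : ∀ w ∈ N, f w < f v)
    (hq : q ∈ convexHull 𝕜 N) : crossing f v q ∈ convexHull 𝕜 (crossing f v '' N) := by
  have key := perspective_mem_convexHull_image (AffineMap.const 𝕜 E (f v) - f.toAffineMap)
    ((-f.smulRight v) + f v • LinearMap.id).toAffineMap (fun w hw ↦ by simpa using hN w hw) hq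
  simpa [crossing_eq_inv_smul] using key

theorem crossing_mem_convexHull_image2 {p q : E} (hP : ∀ v ∈ P, 0 < f v)
    (hN : ∀ w ∈ N, f w ≤ 0) (hp : p ∈ convexHull 𝕜 P) (hq : q ∈ convexHull 𝕜 N) :
    crossing f p q ∈ convexHull 𝕜 (image2 (crossing f) P N) := by
  have hleft : crossing f p '' N ⊆ convexHull 𝕜 (image2 (crossing f) P N) := by
    rintro _ ⟨w, hw, rfl⟩
    refine convexHull_mono ?_ (crossing_mem_convexHull_image_left
      (fun v hv ↦ (hN w hw).trans_lt (hP v hv)) hp)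
    rintro _ ⟨v, hv, rfl⟩
    exact mem_image2_of_mem hv hw
  exact convexHull_min hleft (convex_convexHull 𝕜 _)
    (crossing_mem_convexHull_image_right
      (fun w hw ↦ (hN w hw).trans_lt (pos_of_mem_convexHull hP hp)) hq)

variable (f) (s : Set E)

theorem convexHull_inter_halfSpace_subset :
    convexHull 𝕜 s ∩ {x | f x ≤ 0} ⊆ convexHull 𝕜
      ({v ∈ s | f v ≤ 0} ∪ image2 (crossing f) {v ∈ s | 0 < f v} {w ∈ s | f w < 0}) := by
  set P := {v ∈ s | 0 < f v}
  set N := {v ∈ s | f v ≤ 0}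
  set T := convexHull 𝕜 (N ∪ image2 (crossing f) P {w ∈ s | f w < 0})
  have hs : s = P ∪ N := by
    ext v
    simp only [P, N, mem_union, mem_ofPred_eq, ← and_or_left, lt_or_ge, and_true]
  have hNT : convexHull 𝕜 N ⊆ T := convexHull_mono subset_union_left
  have hcross : image2 (crossing f) P N ⊆ N ∪ image2 (crossing f) P {w ∈ s | f w < 0} := by
    rintro _ ⟨v, hv, w, ⟨hw, hfw⟩, rfl⟩
    rcases hfw.lt_or_eq with hfw | hfw
    · exact Or.inr (mem_image2_of_mem hv ⟨hw, hfw⟩)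
    · rw [crossing_of_apply_eq_zero hv.2.ne' hfw]
      exact Or.inl ⟨hw, hfw.le⟩
  rintro x ⟨hx, hfx⟩
  rcases P.eq_empty_or_nonempty with hP | hP
  · rw [hs, hP, empty_union] at hx
    exact hNT hx
  rcases N.eq_empty_or_nonempty with hN | hN
  · rw [hs, hN, union_empty] at hx
    exact ((pos_of_mem_convexHull (fun v hv ↦ hv.2) hx).not_ge hfx).elim
  rw [hs, convexHull_union hP hN] at hx
  obtain ⟨p, hp, q, hq, hxpq⟩ := mem_convexJoin.1 hx
  have hcT : crossing f p q ∈ T := convexHull_mono hcross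
    (crossing_mem_convexHull_image2 (fun v hv ↦ hv.2) (fun w hw ↦ hw.2) hp hq)
  exact (convex_convexHull 𝕜 _).segment_subset hcT (hNT hq)
    (mem_segment_crossing (pos_of_mem_convexHull (fun v hv ↦ hv.2) hp) hxpq hfx)

theorem convexHull_inter_halfSpace_eq :
    convexHull 𝕜 s ∩ {x | f x ≤ 0} = convexHull 𝕜
      ({v ∈ s | f v ≤ 0} ∪ image2 (crossing f) {v ∈ s | 0 < f v} {w ∈ s | f w < 0}) := by
  refine (convexHull_inter_halfSpace_subset f s).antisymm ?_
  refine convexHull_min ?_ ((convex_convexHull 𝕜 s).inter (convex_halfSpace_le f.isLinear 0))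
  rintro _ (⟨hv, hfv⟩ | ⟨v, ⟨hv, hfv⟩, w, ⟨hw, hfw⟩, rfl⟩)
  · exact ⟨subset_convexHull 𝕜 s hv, hfv⟩
  · refine ⟨segment_subset_convexHull hv hw (crossing_mem_segment hfv hfw.le), ?_⟩
    exact (apply_crossing (by linarith)).le

end Crossing

theorem isLinearMap_projD {n : ℕ} (d : Fin n) : IsLinearMap ℝ (projD d) :=
  ⟨fun x y ↦ by simpa [projD] using Function.update_add x y d 0 0,
    fun c x ↦ by simpa [projD] using Function.update_smul c x d 0⟩

theorem interPts_eq_image2_crossing {n : ℕ} (d : Fin n) (V : Set (Fin n → ℝ)) :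
    interPts d V = image2 (crossing (LinearMap.proj d)) {v ∈ V | 0 < v d} {w ∈ V | w d < 0} := by
  ext x
  constructor
  · rintro ⟨v, hv, w, hw, hfv, hfw, rfl⟩
    exact ⟨v, ⟨hv, hfv⟩, w, ⟨hw, hfw⟩, rfl⟩
  · rintro ⟨v, ⟨hv, hfv⟩, w, ⟨hw, hfw⟩, rfl⟩
    exact ⟨v, hv, w, hw, hfv, hfw, rfl⟩

theorem polytope_bottom_part_vertices_general {n : ℕ} (V : Set (Fin n → ℝ)) (d : Fin n) :
    projD d '' ((convexHull ℝ V) ∩ {x | x d ≤ 0}) =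
      convexHull ℝ ({y | ∃ v ∈ V, v d ≤ 0 ∧ y = projD d v} ∪ interPts d V) := by
  have hbottom := convexHull_inter_halfSpace_eq (LinearMap.proj (R := ℝ) d) V
  simp only [LinearMap.proj_apply] at hbottom
  rw [hbottom, ← interPts_eq_image2_crossing, (isLinearMap_projD d).image_convexHull, image_union]
  congr 2
  · ext y
    simp [and_assoc, eq_comm]
  · refine EqOn.image_eq_self fun x hx ↦ Function.update_eq_self_iff.2 ?_
    obtain ⟨v, hv, w, hw, hfv, hfw, rfl⟩ := hx
    exact (apply_crossing (f := LinearMap.proj (R := ℝ) d) (v := v) (w := w)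
      (by simpa using (hfw.trans hfv).ne')).symm

/-- Vertex description of the bottom part `P_d^-`. -/
theorem polytope_bottom_part_vertices {n : ℕ} (V : Set (Fin n → ℝ))
    (hV : V.Finite) (d : Fin n) :
    projD d '' ((convexHull ℝ V) ∩ {x | x d ≤ 0}) =
      convexHull ℝ ({y | ∃ v ∈ V, v d ≤ 0 ∧ y = projD d v} ∪ interPts d V) :=
  polytope_bottom_part_vertices_general V d
end

section
/- Soundness of the negative-branch under-approximation (one step of Theorem 1): let V ⊆ (Fin n → ℝ) be finite, d : Fin n, and let T be any subset of (convexHull ℝ V) ∩ {x | x d = 0} (for instance a set of chosen intersection points from I_d(V)). Then convexHull ℝ ({Proj_d v | v ∈ V, v d < 0} ∪ T) ⊆ Proj_d '' ((convexHull ℝ V) ∩ {x | x d ≤ 0}), and hence convexHull ℝ ({Proj_d v | v ∈ V, v d < 0} ∪ T) is contained in the image of convexHull ℝ V under r_d. -/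
/-- The coordinate ReLU map acting only on dimension `d`. -/
noncomputable def reluD {n : ℕ} (d : Fin n) (x : Fin n → ℝ) : Fin n → ℝ :=
  Function.update x d (max (x d) 0)

section

variable {n : ℕ} (d : Fin n)

theorem isLinearMap_projD_s12 : IsLinearMap ℝ (projD d) where
  map_add x y := by
    ext i
    by_cases h : i = d <;> simp [projD, h]
  map_smul c x := by
    ext i
    by_cases h : i = d <;> simp [projD, h]

theorem projD_eq_self {x : Fin n → ℝ} (hx : x d = 0) : projD d x = x :=
  Function.update_eq_self_iff.mpr hx.symm

theorem reluD_eq_projD {x : Fin n → ℝ} (hx : x d ≤ 0) : reluD d x = projD d x := by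
  rw [reluD, projD, max_eq_right hx]

theorem Convex.image_projD {s : Set (Fin n → ℝ)} (hs : Convex ℝ s) :
    Convex ℝ (projD d '' s) :=
  hs.is_linear_image (isLinearMap_projD_s12 d)

theorem image_projD_inter_nonpos_subset_image_reluD (s : Set (Fin n → ℝ)) :
    projD d '' (s ∩ {x | x d ≤ 0}) ⊆ reluD d '' s := by
  rintro _ ⟨x, ⟨hxs, hxd⟩, rfl⟩
  exact ⟨x, hxs, reluD_eq_projD d hxd⟩

end

theorem negative_branch_sound_general {n : ℕ} (V : Set (Fin n → ℝ))
    (d : Fin n) (T : Set (Fin n → ℝ))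
    (hT : T ⊆ (convexHull ℝ V) ∩ {x | x d = 0}) :
    convexHull ℝ ({y | ∃ v ∈ V, v d < 0 ∧ y = projD d v} ∪ T) ⊆
      projD d '' ((convexHull ℝ V) ∩ {x | x d ≤ 0}) ∧
    convexHull ℝ ({y | ∃ v ∈ V, v d < 0 ∧ y = projD d v} ∪ T) ⊆
      reluD d '' (convexHull ℝ V) := by
  have hconvex : Convex ℝ (projD d '' ((convexHull ℝ V) ∩ {x | x d ≤ 0})) :=
    ((convex_convexHull ℝ V).inter
      (convex_halfSpace_le (LinearMap.proj d).isLinear 0)).image_projD d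
  have hgenerators : {y | ∃ v ∈ V, v d < 0 ∧ y = projD d v} ∪ T ⊆
      projD d '' ((convexHull ℝ V) ∩ {x | x d ≤ 0}) := by
    rintro y (⟨v, hv, hvd, rfl⟩ | hy)
    · exact ⟨v, ⟨subset_convexHull ℝ V hv, hvd.le⟩, rfl⟩
    · obtain ⟨hyV, hyd⟩ := hT hy
      exact ⟨y, ⟨hyV, le_of_eq hyd⟩, projD_eq_self d hyd⟩
  have hproj := convexHull_min hgenerators hconvex
  exact ⟨hproj, hproj.trans (image_projD_inter_nonpos_subset_image_reluD d _)⟩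

/-- Soundness of the negative-branch under-approximation. -/
theorem negative_branch_sound {n : ℕ} (V : Set (Fin n → ℝ))
    (hV : V.Finite) (d : Fin n) (T : Set (Fin n → ℝ))
    (hT : T ⊆ (convexHull ℝ V) ∩ {x | x d = 0}) :
    convexHull ℝ ({y | ∃ v ∈ V, v d < 0 ∧ y = projD d v} ∪ T) ⊆
      projD d '' ((convexHull ℝ V) ∩ {x | x d ≤ 0}) ∧
    convexHull ℝ ({y | ∃ v ∈ V, v d < 0 ∧ y = projD d v} ∪ T) ⊆
      reluD d '' (convexHull ℝ V) :=
  negative_branch_sound_general V d T hT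
end

section
/- Per-dimension completeness of the under-approximation branches (one step of Theorem 3): for every finite set V ⊆ (Fin n → ℝ) and every index d : Fin n, the image of convexHull ℝ V under r_d is contained in the convex hull of the union of the two maximal branch outputs, i.e., r_d '' (convexHull ℝ V) ⊆ convexHull ℝ ({v ∈ V | 0 ≤ v d} ∪ {Proj_d v | v ∈ V, v d ≤ 0} ∪ I_d(V)). -/
/-!
Write `x = p + q` with `p = ∑ μ v • v` over the vertices with `0 ≤ v d` and `q` the sum over
those with `u d < 0`, and put `a = p d`, `b = -q d`; if `0 ≤ x d` then `0 ≤ b ≤ a`. The crossing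
point `c v u` of `[v, u]` with the hyperplane `x d = 0` satisfies
`(v d - u d) • c v u = (-u d) • v + v d • u`, so the crossing points weighted by
`μ v * μ u * (v d - u d)` sum to `b • p + a • q`. Therefore `a • x = (a - b) • p + (b • p + a • q)`
is a nonnegative combination, of total weight `a`, of vertices with `0 ≤ v d` and of crossing
points. If `x d ≤ 0`, the same argument for the functional `-x d` puts `x` in the hull of the
vertices with `v d ≤ 0` and the crossing points, and the linear map `Proj_d`, which fixes the
crossing points, carries this to `r_d x = Proj_d x`.
-/

open Finset

theorem Convex.mem_of_sum_add_sum_eq_smul {E ι κ : Type*} [AddCommGroup E] [Module ℝ E]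
    {C : Set E} (hC : Convex ℝ C) {s : Finset ι} {t : Finset κ} {w : ι → ℝ} {w' : κ → ℝ}
    {z : ι → E} {z' : κ → E} {x : E} (hw : ∀ i ∈ s, 0 ≤ w i) (hw' : ∀ j ∈ t, 0 ≤ w' j)
    (hz : ∀ i ∈ s, z i ∈ C) (hz' : ∀ j ∈ t, z' j ∈ C)
    (hpos : 0 < ∑ i ∈ s, w i + ∑ j ∈ t, w' j)
    (hx : ∑ i ∈ s, w i • z i + ∑ j ∈ t, w' j • z' j = (∑ i ∈ s, w i + ∑ j ∈ t, w' j) • x) :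
    x ∈ C := by
  have hmem := hC.centerMass_mem (t := s.disjSum t) (w := Sum.elim w w') (z := Sum.elim z z')
    (by rintro (i | j) h <;> simp_all) (by simpa [sum_disjSum]) (by rintro (i | j) h <;> simp_all)
  simp only [centerMass, sum_disjSum, Sum.elim_inl, Sum.elim_inr] at hmem
  rwa [hx, inv_smul_smul₀ hpos.ne'] at hmem

section CrossPoint

variable {E : Type*} [AddCommGroup E] [Module ℝ E] (f : E →ₗ[ℝ] ℝ)

/-- The point where the segment `[v, w]` meets the hyperplane `f = 0`, when `f v ≠ f w`. -/
noncomputable def crossPt (v w : E) : E :=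
  (-f w / (f v - f w)) • v + (f v / (f v - f w)) • w

def crossPts (V : Set E) : Set E :=
  {x | ∃ v ∈ V, ∃ w ∈ V, 0 < f v ∧ f w < 0 ∧ x = crossPt f v w}

variable {f}

theorem sub_smul_crossPt {v w : E} (h : f v ≠ f w) :
    (f v - f w) • crossPt f v w = (-f w) • v + f v • w := by
  have h' : f v - f w ≠ 0 := sub_ne_zero.2 h
  rw [crossPt, smul_add, smul_smul, smul_smul, mul_div_cancel₀ _ h', mul_div_cancel₀ _ h']

theorem apply_crossPt {v w : E} (h : f v ≠ f w) : f (crossPt f v w) = 0 := by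
  have := congrArg f (sub_smul_crossPt h)
  simp only [map_smul, map_add, smul_eq_mul] at this
  exact (mul_eq_zero.1 (by linarith)).resolve_left (sub_ne_zero.2 h)

theorem apply_eq_zero_of_mem_crossPts {V : Set E} {y : E} (hy : y ∈ crossPts f V) : f y = 0 := by
  obtain ⟨v, -, w, -, hv, hw, rfl⟩ := hy
  exact apply_crossPt (hw.trans hv).ne'

theorem crossPt_of_apply_eq_zero {v w : E} (hv : f v = 0) (hw : f w ≠ 0) : crossPt f v w = v := by
  simp [crossPt, hv, hw]

theorem crossPt_neg (v w : E) : crossPt (-f) v w = crossPt f w v := by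
  simp only [crossPt, LinearMap.neg_apply, neg_neg, neg_sub_neg]
  rw [add_comm]

theorem crossPts_neg (V : Set E) : crossPts (-f) V = crossPts f V := by
  suffices ∀ g : E →ₗ[ℝ] ℝ, crossPts (-g) V ⊆ crossPts g V from
    (this f).antisymm (by simpa using this (-f))
  rintro g _ ⟨v, hv, w, hw, hgv, hgw, rfl⟩
  simp only [LinearMap.neg_apply, neg_pos, neg_lt_zero] at hgv hgw
  exact ⟨w, hw, v, hv, hgw, hgv, crossPt_neg v w⟩

theorem sum_product_mul_mul_sub {ι : Type*} (P N : Finset ι) (α β g : ι → ℝ) :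
    ∑ p ∈ P ×ˢ N, α p.1 * β p.2 * (g p.1 - g p.2) =
      (∑ u ∈ N, β u * -g u) * ∑ v ∈ P, α v + (∑ v ∈ P, α v * g v) * ∑ u ∈ N, β u := by
  rw [sum_product, sum_mul_sum, sum_mul_sum, sum_comm (s := N), ← sum_add_distrib]
  refine sum_congr rfl fun v _ => ?_
  rw [← sum_add_distrib]
  exact sum_congr rfl fun u _ => by ring

theorem sum_product_smul_crossPt {P N : Finset E} (hPN : ∀ v ∈ P, ∀ u ∈ N, f v ≠ f u)
    (α β : E → ℝ) :
    ∑ p ∈ P ×ˢ N, (α p.1 * β p.2 * (f p.1 - f p.2)) • crossPt f p.1 p.2 =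
      (∑ u ∈ N, β u * -f u) • ∑ v ∈ P, α v • v + (∑ v ∈ P, α v * f v) • ∑ u ∈ N, β u • u := by
  rw [sum_product, sum_smul_sum, sum_smul_sum, sum_comm (s := N), ← sum_add_distrib]
  refine sum_congr rfl fun v hv => ?_
  rw [← sum_add_distrib]
  refine sum_congr rfl fun u hu => ?_
  rw [mul_smul, sub_smul_crossPt (hPN v hv u hu)]
  module

theorem sum_add_sum_mem_of_crossPt_mem {C : Set E} (hC : Convex ℝ C) {P N : Finset E}
    {μ : E → ℝ} (hP : ∀ v ∈ P, 0 ≤ f v ∧ v ∈ C) (hN : ∀ u ∈ N, f u < 0)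
    (hPN : ∀ v ∈ P, ∀ u ∈ N, crossPt f v u ∈ C) (hμP : ∀ v ∈ P, 0 ≤ μ v)
    (hμN : ∀ u ∈ N, 0 ≤ μ u) (hμ : ∑ v ∈ P, μ v + ∑ u ∈ N, μ u = 1)
    (hf : 0 ≤ f (∑ v ∈ P, μ v • v + ∑ u ∈ N, μ u • u)) :
    ∑ v ∈ P, μ v • v + ∑ u ∈ N, μ u • u ∈ C := by
  set a := ∑ v ∈ P, μ v * f v
  set b := ∑ u ∈ N, μ u * -f u
  have hbN : ∀ u ∈ N, 0 ≤ μ u * -f u := fun u hu =>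
    mul_nonneg (hμN u hu) (neg_nonneg.2 (hN u hu).le)
  have hba : b ≤ a := by
    simp only [map_add, map_sum, map_smul, smul_eq_mul] at hf
    simp only [a, b, mul_neg, sum_neg_distrib]
    linarith
  rcases (sum_nonneg hbN).eq_or_lt with hb | hb
  · have hμN0 : ∀ u ∈ N, μ u = 0 := fun u hu =>
      (mul_eq_zero.1 ((sum_eq_zero_iff_of_nonneg hbN).1 hb.symm u hu)).resolve_right
        (neg_ne_zero.2 (hN u hu).ne)
    rw [sum_eq_zero hμN0, add_zero] at hμ
    rw [sum_eq_zero (s := N) fun u hu => by rw [hμN0 u hu, zero_smul], add_zero]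
    exact hC.sum_mem hμP hμ fun v hv => (hP v hv).2
  · have ha : 0 < a := hb.trans_le hba
    have hweight :
        ∑ v ∈ P, (a - b) * μ v + ∑ p ∈ P ×ˢ N, μ p.1 * μ p.2 * (f p.1 - f p.2) = a := by
      rw [← mul_sum, sum_product_mul_mul_sub]
      linear_combination a * hμ
    refine hC.mem_of_sum_add_sum_eq_smul (w := fun v => (a - b) * μ v) (z := id)
      (w' := fun p => μ p.1 * μ p.2 * (f p.1 - f p.2)) (z' := fun p => crossPt f p.1 p.2)
      (fun v hv => mul_nonneg (by linarith) (hμP v hv)) ?_ (fun v hv => (hP v hv).2)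
      (fun p hp => hPN _ (mem_product.1 hp).1 _ (mem_product.1 hp).2) (hweight.symm ▸ ha) ?_
    · rintro ⟨v, u⟩ hvu
      rw [mem_product] at hvu
      exact mul_nonneg (mul_nonneg (hμP v hvu.1) (hμN u hvu.2))
        (by linarith [(hP v hvu.1).1, hN u hvu.2])
    · rw [hweight, sum_product_smul_crossPt fun v hv u hu => ((hN u hu).trans_le (hP v hv).1).ne']
      simp only [id, mul_smul, ← smul_sum]
      module

variable (f) in
theorem convexHull_inter_nonneg_subset (s : Finset E) :
    convexHull ℝ (s : Set E) ∩ {x | 0 ≤ f x} ⊆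
      convexHull ℝ ({v ∈ (s : Set E) | 0 ≤ f v} ∪ crossPts f s) := by
  classical
  rintro _ ⟨hx, hfx : 0 ≤ f _⟩
  obtain ⟨μ, hμ0, hμ1, rfl⟩ := Finset.mem_convexHull'.1 hx
  rw [← sum_filter_add_sum_filter_not s (0 ≤ f ·)] at hμ1 hfx ⊢
  have hP {v} (hv : v ∈ s.filter (0 ≤ f ·)) :
      v ∈ convexHull ℝ ({v ∈ (s : Set E) | 0 ≤ f v} ∪ crossPts f s) :=
    subset_convexHull ℝ _ (Or.inl (by simpa using hv))
  refine sum_add_sum_mem_of_crossPt_mem (convex_convexHull ℝ _)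
    (fun v hv => ⟨(mem_filter.1 hv).2, hP hv⟩) (fun u hu => not_le.1 (mem_filter.1 hu).2) ?_
    (fun v hv => hμ0 v (mem_filter.1 hv).1) (fun u hu => hμ0 u (mem_filter.1 hu).1) hμ1 hfx
  intro v hv u hu
  obtain ⟨⟨hvs, hfv⟩, hus, hfu⟩ := And.intro (mem_filter.1 hv) (mem_filter.1 hu)
  rcases hfv.eq_or_lt with hfv | hfv
  · rw [crossPt_of_apply_eq_zero hfv.symm (not_le.1 hfu).ne]
    exact hP hv
  · exact subset_convexHull ℝ _ (Or.inr ⟨v, hvs, u, hus, hfv, not_le.1 hfu, rfl⟩)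

variable (f) in
theorem convexHull_inter_nonpos_subset (s : Finset E) :
    convexHull ℝ (s : Set E) ∩ {x | f x ≤ 0} ⊆
      convexHull ℝ ({v ∈ (s : Set E) | f v ≤ 0} ∪ crossPts f s) := by
  simpa [crossPts_neg] using convexHull_inter_nonneg_subset (-f) s

end CrossPoint

section Coordinate

variable {n : ℕ} {d : Fin n} {x : Fin n → ℝ}

theorem reluD_of_nonneg (h : 0 ≤ x d) : reluD d x = x := by
  rw [reluD, max_eq_left h, Function.update_eq_self]

theorem reluD_of_nonpos (h : x d ≤ 0) : reluD d x = projD d x := by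
  rw [reluD, projD, max_eq_right h]

theorem projD_of_eq_zero (h : x d = 0) : projD d x = x := by
  rw [projD, ← h, Function.update_eq_self]

variable (d) in
def projDₗ : (Fin n → ℝ) →ₗ[ℝ] Fin n → ℝ where
  toFun := projD d
  map_add' x y := by
    ext i
    by_cases h : i = d <;> simp [projD, h]
  map_smul' c x := by
    ext i
    by_cases h : i = d <;> simp [projD, h]

theorem projDₗ_apply : projDₗ d x = projD d x := rfl

end Coordinate

/-- Per-dimension completeness of the under-approximation branches. -/
theorem reluD_image_subset_cvx_branches {n : ℕ} (V : Set (Fin n → ℝ))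
    (hV : V.Finite) (d : Fin n) :
    reluD d '' (convexHull ℝ V) ⊆
      convexHull ℝ ({v ∈ V | 0 ≤ v d} ∪
        {y | ∃ v ∈ V, v d ≤ 0 ∧ y = projD d v} ∪ interPts d V) := by
  obtain ⟨s, rfl⟩ := hV.exists_finset_coe
  -- `crossPts π V` unfolds to `interPts d V`.
  let π : (Fin n → ℝ) →ₗ[ℝ] ℝ := LinearMap.proj d
  rintro _ ⟨x, hx, rfl⟩
  rcases le_total 0 (x d) with h | h
  · rw [reluD_of_nonneg h]
    refine convexHull_mono ?_ (convexHull_inter_nonneg_subset π s ⟨hx, h⟩)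
    exact Set.union_subset_union_left _ Set.subset_union_left
  · have hx' := Set.mem_image_of_mem (projDₗ d) (convexHull_inter_nonpos_subset π s ⟨hx, h⟩)
    rw [LinearMap.image_convexHull, projDₗ_apply] at hx'
    rw [reluD_of_nonpos h]
    refine convexHull_mono ?_ hx'
    rintro _ ⟨y, ⟨hy, hyd⟩ | hy, rfl⟩
    · exact Or.inl (Or.inr ⟨y, hy, hyd, rfl⟩)
    · rw [projDₗ_apply, projD_of_eq_zero (x := y) (apply_eq_zero_of_mem_crossPts hy)]
      exact Or.inr hy
end
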